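/- arXiv:0910.3057 — 3 statements merged into one kernel-verified Lean document; each statement's English description precedes it below -/
import Mathlib

section
/- Let s ≥ 3 be real and let (M_j)_{j≥0} be defined by M_0 = 1 and M_j = ((j-1)!)^s ρ^{-(s+n)(j-1)} ((j+2)/ρ)^{sδ/2} for j ≥ 1, where 0 < ρ < 1, n ≥ 1, 0 < δ ≤ 1, and sδ/2 ≤ s - 2. Then there is a constant C depending only on s such that for all j ≥ 2 and all 1 ≤ i ≤ j-1, (j! / (i!(j-i)!)) M_i M_{j-i} ≤ C M_j. -/
set_option maxHeartbeats 1000000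

private lemma rpow_core (s e b fi fji fj I Ji : ℝ) (hs : 3 ≤ s) (he0 : 0 ≤ e)
    (hes : e ≤ s - 2) (hb : 1 ≤ b) (hI : 1 ≤ I) (hJi : 1 ≤ Ji)
    (hfi : 0 ≤ fi) (hfji : 0 ≤ fji) (hfj : 0 ≤ fj)
    (hfact : b * fi * fji * (I * Ji) = (I + Ji) * fj) :
    b * fi ^ s * fji ^ s * (I + 2) ^ e * (Ji + 2) ^ e
      ≤ 9 ^ s * fj ^ s * (I + Ji + 2) ^ e := by
  set a : ℝ := I * Ji with ha_def
  set J : ℝ := I + Ji with hJ_def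
  have ha0 : (0:ℝ) < a := mul_pos (by linarith) (by linarith)
  have hJ2 : (2:ℝ) ≤ J := by rw [hJ_def]; linarith
  have hJ0 : (0:ℝ) < J := by linarith
  have haJ : J - 1 ≤ a := by
    have : (0:ℝ) ≤ (I - 1) * (Ji - 1) := mul_nonneg (by linarith) (by linarith)
    rw [hJ_def, ha_def]; nlinarith
  have hJa2 : J / a ≤ 2 := by rw [div_le_iff₀ ha0]; linarith
  have hJa0 : (0:ℝ) < J / a := div_pos hJ0 ha0
  have hb0 : (0:ℝ) < b := lt_of_lt_of_le one_pos hb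
  -- step 1
  have hbs : b ≤ b ^ s := by
    nth_rewrite 1 [← Real.rpow_one b]
    exact Real.rpow_le_rpow_of_exponent_le hb (by linarith)
  have hprod : b * fi * fji = J * fj / a := by
    rw [eq_div_iff ha0.ne']
    linarith [hfact]
  have E1 : b * fi ^ s * fji ^ s ≤ (J * fj / a) ^ s := by
    rw [← hprod, Real.mul_rpow (by positivity) hfji, Real.mul_rpow (by positivity) hfi]
    exact mul_le_mul_of_nonneg_right
      (mul_le_mul_of_nonneg_right hbs (by positivity)) (by positivity)
  -- step 2
  set R : ℝ := (I + 2) * (Ji + 2) / (J + 2) with hR_def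
  have hR1 : (1:ℝ) ≤ R := by
    rw [hR_def, le_div_iff₀ (by linarith)]
    rw [hJ_def]; nlinarith
  have hRe : R ^ e ≤ R ^ (s - 2) := Real.rpow_le_rpow_of_exponent_le hR1 hes
  have hR9 : R ≤ 9 * a / J := by
    rw [hR_def, div_le_div_iff₀ (by linarith) hJ0, ha_def, hJ_def]
    nlinarith [mul_nonneg (sub_nonneg.mpr hI) (sub_nonneg.mpr hJi),
      mul_nonneg (mul_nonneg (sub_nonneg.mpr hI) (sub_nonneg.mpr hJi)) (by linarith : (0:ℝ) ≤ I + Ji),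
      mul_pos (by linarith : (0:ℝ) < I) (by linarith : (0:ℝ) < Ji)]
  have E2 : (I + 2) ^ e * (Ji + 2) ^ e ≤ (9 * a / J) ^ (s - 2) * (J + 2) ^ e := by
    rw [← Real.mul_rpow (by linarith) (by linarith)]
    have hsplit : ((I + 2) * (Ji + 2)) ^ e = R ^ e * (J + 2) ^ e := by
      rw [← Real.mul_rpow (by positivity) (by linarith)]
      rw [hR_def, div_mul_cancel₀ _ (by positivity : (J:ℝ) + 2 ≠ 0)]
    rw [hsplit]
    exact mul_le_mul_of_nonneg_right
      (hRe.trans (Real.rpow_le_rpow (by positivity) hR9 (by linarith))) (by positivity)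
  -- step 3
  have h3' : (J / a) ^ s * ((J / a) ^ (s - 2))⁻¹ = (J / a) ^ (2:ℝ) := by
    rw [← div_eq_mul_inv, ← Real.rpow_sub hJa0]
    norm_num
  have h4 : (J / a) ^ (2:ℝ) ≤ 4 := by
    have h24 : (2:ℝ) ^ (2:ℝ) = 4 := by
      rw [show (2:ℝ) = ((2:ℕ):ℝ) by norm_num, Real.rpow_natCast]
      norm_num
    calc (J / a) ^ (2:ℝ) ≤ (2:ℝ) ^ (2:ℝ) :=
          Real.rpow_le_rpow hJa0.le hJa2 (by norm_num)
      _ = 4 := h24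
  have h92 : (9:ℝ) ^ (2:ℝ) = 81 := by
    rw [show (2:ℝ) = ((2:ℕ):ℝ) by norm_num, Real.rpow_natCast]
    norm_num
  have h5 : (9:ℝ) ^ (s - 2) * 4 ≤ 9 ^ s := by
    have h9s : (9:ℝ) ^ s = 9 ^ (s - 2) * 9 ^ (2:ℝ) := by
      rw [← Real.rpow_add (by norm_num)]; ring_nf
    rw [h9s, h92]
    have : (0:ℝ) < (9:ℝ) ^ (s - 2) := Real.rpow_pos_of_pos (by norm_num) _
    nlinarith
  have step5 : (J * fj / a) ^ s * (9 * a / J) ^ (s - 2) ≤ 9 ^ s * fj ^ s := by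
    have h1 : (J * fj / a) ^ s = fj ^ s * (J / a) ^ s := by
      rw [show J * fj / a = fj * (J / a) by ring, Real.mul_rpow hfj hJa0.le]
    have h2 : (9 * a / J) ^ (s - 2) = 9 ^ (s - 2) * ((J / a) ^ (s - 2))⁻¹ := by
      rw [show 9 * a / J = 9 * (J / a)⁻¹ by rw [inv_div]; ring,
        Real.mul_rpow (by norm_num) (by positivity), ← Real.inv_rpow hJa0.le,
        Real.inv_rpow hJa0.le]
    calc (J * fj / a) ^ s * (9 * a / J) ^ (s - 2)
        = fj ^ s * ((J / a) ^ s * ((J / a) ^ (s - 2))⁻¹) * 9 ^ (s - 2) := by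
          rw [h1, h2]; ring
      _ = fj ^ s * (J / a) ^ (2:ℝ) * 9 ^ (s - 2) := by rw [h3']
      _ ≤ fj ^ s * 4 * 9 ^ (s - 2) := by
          have hfj9 : (0:ℝ) ≤ (9:ℝ) ^ (s - 2) := (Real.rpow_pos_of_pos (by norm_num) _).le
          have := mul_le_mul_of_nonneg_right
            (mul_le_mul_of_nonneg_left h4 (by positivity : (0:ℝ) ≤ fj ^ s)) hfj9
          linarith
      _ ≤ 9 ^ s * fj ^ s := by
          have hfjs : (0:ℝ) ≤ fj ^ s := by positivity
          have := mul_le_mul_of_nonneg_left h5 hfjs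
          linarith
  calc b * fi ^ s * fji ^ s * (I + 2) ^ e * (Ji + 2) ^ e
      = (b * fi ^ s * fji ^ s) * ((I + 2) ^ e * (Ji + 2) ^ e) := by ring
    _ ≤ (J * fj / a) ^ s * ((9 * a / J) ^ (s - 2) * (J + 2) ^ e) :=
        mul_le_mul E1 E2 (by positivity) (by positivity)
    _ = ((J * fj / a) ^ s * (9 * a / J) ^ (s - 2)) * (J + 2) ^ e := by ring
    _ ≤ (9 ^ s * fj ^ s) * (J + 2) ^ e :=
        mul_le_mul_of_nonneg_right step5 (by positivity)
    _ = 9 ^ s * fj ^ s * (J + 2) ^ e := by ring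

/-- The monotonicity condition for the majorant sequence
`M_j = ((j-1)!)^s ρ^{-(s+n)(j-1)} ((j+2)/ρ)^{sδ/2}`. -/
theorem majorant_monotonicity (s : ℝ) (hs : 3 ≤ s) :
    ∃ C > 0, ∀ (n : ℕ) (ρ δ : ℝ), 1 ≤ n → 0 < ρ → ρ < 1 → 0 < δ → δ ≤ 1 →
      s * δ / 2 ≤ s - 2 →
      ∀ j i : ℕ, 2 ≤ j → 1 ≤ i → i ≤ j - 1 →
        (j.choose i : ℝ) *
          ((fun k : ℕ => if k = 0 then (1 : ℝ) else
            ((Nat.factorial (k - 1) : ℝ)) ^ s * ρ ^ (-((s + n) * ((k : ℝ) - 1))) *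
              (((k : ℝ) + 2) / ρ) ^ (s * δ / 2)) i) *
          ((fun k : ℕ => if k = 0 then (1 : ℝ) else
            ((Nat.factorial (k - 1) : ℝ)) ^ s * ρ ^ (-((s + n) * ((k : ℝ) - 1))) *
              (((k : ℝ) + 2) / ρ) ^ (s * δ / 2)) (j - i))
        ≤ C * ((fun k : ℕ => if k = 0 then (1 : ℝ) else
            ((Nat.factorial (k - 1) : ℝ)) ^ s * ρ ^ (-((s + n) * ((k : ℝ) - 1))) *
              (((k : ℝ) + 2) / ρ) ^ (s * δ / 2)) j) := by
  refine ⟨(9:ℝ) ^ s, Real.rpow_pos_of_pos (by norm_num) s, ?_⟩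
  intro n ρ δ hn hρ hρ1 hδ hδ1 hsd j i hj hi hij
  have hij' : i < j := by omega
  obtain ⟨i', rfl⟩ : ∃ m, i = m + 1 := ⟨i - 1, by omega⟩
  obtain ⟨d, rfl⟩ : ∃ m, j = i' + 1 + m + 1 := ⟨j - i' - 2, by omega⟩
  simp only [show i' + 1 ≠ 0 from by omega, show i' + 1 + d + 1 - (i' + 1) = d + 1 from by omega,
    show d + 1 ≠ 0 from by omega, show i' + 1 + d + 1 ≠ 0 from by omega,
    show i' + 1 - 1 = i' from by omega, show d + 1 - 1 = d from by omega,
    show i' + 1 + d + 1 - 1 = i' + 1 + d from by omega, if_false, ite_false]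
  have hs0 : (0:ℝ) ≤ s := by linarith
  have he0 : (0:ℝ) ≤ s * δ / 2 := by positivity
  have hn1 : (1:ℝ) ≤ (n:ℝ) := by exact_mod_cast hn
  -- the factorial/choose identity
  have hN : (i' + 1 + d + 1).choose (i' + 1) * Nat.factorial (i' + 1) * Nat.factorial (d + 1)
      = Nat.factorial (i' + 1 + d + 1) := by
    have h := Nat.choose_mul_factorial_mul_factorial (show i' + 1 ≤ i' + 1 + d + 1 by omega)
    rw [show i' + 1 + d + 1 - (i' + 1) = d + 1 from by omega] at h
    exact h
  have hfact : (((i' + 1 + d + 1).choose (i' + 1) : ℕ) : ℝ) * (i'.factorial : ℝ) *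
        (d.factorial : ℝ) * (((i' + 1 : ℕ) : ℝ) * ((d + 1 : ℕ) : ℝ))
      = (((i' + 1 : ℕ) : ℝ) + ((d + 1 : ℕ) : ℝ)) * ((i' + 1 + d).factorial : ℝ) := by
    rw [Nat.factorial_succ i', Nat.factorial_succ d, Nat.factorial_succ (i' + 1 + d)] at hN
    have hNR : (((i' + 1 + d + 1).choose (i' + 1) * ((i' + 1) * i'.factorial) *
        ((d + 1) * d.factorial) : ℕ) : ℝ) = (((i' + 1 + d + 1) * (i' + 1 + d).factorial : ℕ) : ℝ) := by
      exact_mod_cast hN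
    push_cast at hNR ⊢
    linarith [hNR]
  have hb : (1:ℝ) ≤ (((i' + 1 + d + 1).choose (i' + 1) : ℕ) : ℝ) := by
    exact_mod_cast Nat.one_le_iff_ne_zero.mpr (Nat.choose_pos (by omega)).ne'
  have hI : (1:ℝ) ≤ (((i' + 1 : ℕ) : ℝ)) := by exact_mod_cast Nat.le_add_left 1 i'
  have hJi : (1:ℝ) ≤ (((d + 1 : ℕ) : ℝ)) := by exact_mod_cast Nat.le_add_left 1 d
  have key1 := rpow_core s (s * δ / 2) (((i' + 1 + d + 1).choose (i' + 1) : ℕ) : ℝ)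
    (i'.factorial : ℝ) (d.factorial : ℝ) ((i' + 1 + d).factorial : ℝ)
    (((i' + 1 : ℕ) : ℝ)) (((d + 1 : ℕ) : ℝ)) hs he0 hsd hb hI hJi
    (Nat.cast_nonneg _) (Nat.cast_nonneg _) (Nat.cast_nonneg _) hfact
  rw [show (((i' + 1 : ℕ) : ℝ)) + (((d + 1 : ℕ) : ℝ)) + 2 = (((i' + 1 + d + 1 : ℕ) : ℝ)) + 2
    from by push_cast; ring] at key1
  have key2 : ρ ^ (-((s + ↑n) * ((((i' + 1 : ℕ) : ℝ)) - 1))) *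
        ρ ^ (-((s + ↑n) * ((((d + 1 : ℕ) : ℝ)) - 1))) *
        (ρ ^ (s * δ / 2))⁻¹ * (ρ ^ (s * δ / 2))⁻¹
      ≤ ρ ^ (-((s + ↑n) * ((((i' + 1 + d + 1 : ℕ) : ℝ)) - 1))) * (ρ ^ (s * δ / 2))⁻¹ := by
    simp only [← Real.rpow_neg hρ.le, ← Real.rpow_add hρ]
    apply Real.rpow_le_rpow_of_exponent_ge hρ hρ1.le
    push_cast
    nlinarith [hn1, hsd, hs]
  rw [Real.div_rpow (by positivity) hρ.le, Real.div_rpow (by positivity) hρ.le,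
    Real.div_rpow (by positivity) hρ.le]
  calc (((i' + 1 + d + 1).choose (i' + 1) : ℕ) : ℝ) *
        ((i'.factorial : ℝ) ^ s * ρ ^ (-((s + ↑n) * ((((i' + 1 : ℕ) : ℝ)) - 1))) *
          (((((i' + 1 : ℕ) : ℝ)) + 2) ^ (s * δ / 2) / ρ ^ (s * δ / 2))) *
        ((d.factorial : ℝ) ^ s * ρ ^ (-((s + ↑n) * ((((d + 1 : ℕ) : ℝ)) - 1))) *
          (((((d + 1 : ℕ) : ℝ)) + 2) ^ (s * δ / 2) / ρ ^ (s * δ / 2)))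
      = ((((i' + 1 + d + 1).choose (i' + 1) : ℕ) : ℝ) * (i'.factorial : ℝ) ^ s *
          (d.factorial : ℝ) ^ s * ((((i' + 1 : ℕ) : ℝ)) + 2) ^ (s * δ / 2) *
          ((((d + 1 : ℕ) : ℝ)) + 2) ^ (s * δ / 2)) *
        (ρ ^ (-((s + ↑n) * ((((i' + 1 : ℕ) : ℝ)) - 1))) *
          ρ ^ (-((s + ↑n) * ((((d + 1 : ℕ) : ℝ)) - 1))) *
          (ρ ^ (s * δ / 2))⁻¹ * (ρ ^ (s * δ / 2))⁻¹) := by ring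
    _ ≤ (9 ^ s * ((i' + 1 + d).factorial : ℝ) ^ s * ((((i' + 1 + d + 1 : ℕ) : ℝ)) + 2) ^ (s * δ / 2)) *
        (ρ ^ (-((s + ↑n) * ((((i' + 1 + d + 1 : ℕ) : ℝ)) - 1))) * (ρ ^ (s * δ / 2))⁻¹) :=
        mul_le_mul key1 key2 (by positivity) (by positivity)
    _ = 9 ^ s * (((i' + 1 + d).factorial : ℝ) ^ s *
          ρ ^ (-((s + ↑n) * ((((i' + 1 + d + 1 : ℕ) : ℝ)) - 1))) *
          (((((i' + 1 + d + 1 : ℕ) : ℝ)) + 2) ^ (s * δ / 2) / ρ ^ (s * δ / 2))) := by ring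
end

section
/- Let s ≥ 2 be a real number and j ≥ 4 an integer. Then for all integers i with 2 ≤ i ≤ j-2, one has ((i-2)!)^s ((j-i-2)!)^s ≤ ((j-4)!)^s, and consequently Σ_{i=2}^{j-2} (j!/(i!(j-i)!)) ((i-2)!)^s ((j-i-2)!)^s ≤ C_s ((j-2)!)^s · j³ / (j-2)^{s-1} for some constant C_s depending only on s. -/
private lemma fact_mul_fact_le (m n : ℕ) : m.factorial * n.factorial ≤ (m + n).factorial :=
  Nat.le_of_dvd (Nat.factorial_pos _) (Nat.factorial_mul_factorial_dvd_factorial_add m n)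

private lemma rpow_split (s x : ℝ) (hx : 0 < x) : x ^ s = x * x ^ (s - 1) := by
  calc x ^ s = x ^ (1 + (s - 1)) := by ring_nf
  _ = x ^ (1:ℝ) * x ^ (s - 1) := Real.rpow_add hx 1 (s - 1)
  _ = x * x ^ (s - 1) := by rw [Real.rpow_one]

private lemma part1_aux (s : ℝ) (hs : 0 ≤ s) (m n : ℕ) :
    ((m.factorial : ℝ)) ^ s * ((n.factorial : ℝ)) ^ s ≤ (((m + n).factorial : ℝ)) ^ s := by
  rw [← Real.mul_rpow (by positivity) (by positivity)]
  apply Real.rpow_le_rpow (by positivity) _ hs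
  exact_mod_cast fact_mul_fact_le m n

private lemma key_term (s : ℝ) (hs : 2 ≤ s) (m n : ℕ) :
    (((m + n + 4).choose (m + 2) : ℕ) : ℝ) * ((m.factorial : ℝ)) ^ s * ((n.factorial : ℝ)) ^ s
      ≤ ((m : ℝ) + n + 4) ^ 2 / 4 * (((m + n + 2).factorial : ℝ)) ^ s
        / ((m : ℝ) + n + 2) ^ (s - 1) := by
  have hs1 : (0:ℝ) ≤ s - 1 := by linarith
  set c : ℕ := (m + n + 4).choose (m + 2) with hc
  have ha : (0:ℝ) < (m.factorial : ℝ) := by exact_mod_cast m.factorial_pos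
  have hb : (0:ℝ) < (n.factorial : ℝ) := by exact_mod_cast n.factorial_pos
  have hF : (0:ℝ) < ((m + n + 2).factorial : ℝ) := by exact_mod_cast (m+n+2).factorial_pos
  have hD : (0:ℝ) < (m : ℝ) + n + 2 := by positivity
  rw [le_div_iff₀ (Real.rpow_pos_of_pos hD _)]
  -- nat inequality: 4 * (c * m! * n!) ≤ (m+n+4)!
  have hfact : c * (m + 2).factorial * (n + 2).factorial = (m + n + 4).factorial := by
    have h := Nat.choose_mul_factorial_mul_factorial (show m + 2 ≤ m + n + 4 by omega)
    rw [show m + n + 4 - (m + 2) = n + 2 by omega] at h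
    exact h
  have e1 : (m + 2).factorial = (m + 2) * (m + 1) * m.factorial := by
    rw [Nat.factorial_succ, Nat.factorial_succ]; ring
  have e2 : (n + 2).factorial = (n + 2) * (n + 1) * n.factorial := by
    rw [Nat.factorial_succ, Nat.factorial_succ]; ring
  have hnat : 4 * (c * m.factorial * n.factorial) ≤ (m + n + 4).factorial := by
    rw [← hfact, e1, e2]
    have hm : 2 ≤ (m + 2) * (m + 1) := by
      calc 2 = 2 * 1 := rfl
        _ ≤ (m + 2) * (m + 1) := Nat.mul_le_mul (by omega) (by omega)
    have hn : 2 ≤ (n + 2) * (n + 1) := by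
      calc 2 = 2 * 1 := rfl
        _ ≤ (n + 2) * (n + 1) := Nat.mul_le_mul (by omega) (by omega)
    have h4 : 4 ≤ (m + 2) * (m + 1) * ((n + 2) * (n + 1)) := by
      calc 4 = 2 * 2 := rfl
        _ ≤ (m + 2) * (m + 1) * ((n + 2) * (n + 1)) := Nat.mul_le_mul hm hn
    calc 4 * (c * m.factorial * n.factorial)
        ≤ ((m + 2) * (m + 1) * ((n + 2) * (n + 1))) * (c * m.factorial * n.factorial) :=
          Nat.mul_le_mul_right _ h4
      _ = c * ((m + 2) * (m + 1) * m.factorial) * ((n + 2) * (n + 1) * n.factorial) := by ring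
  have hnat2 : (m + n + 4).factorial ≤ (m + n + 4) * (m + n + 4) * (m + n + 2).factorial := by
    have : (m + n + 4).factorial = (m + n + 4) * ((m + n + 3) * (m + n + 2).factorial) := by
      rw [show m + n + 4 = (m + n + 3) + 1 by ring, Nat.factorial_succ,
        show m + n + 3 = (m + n + 2) + 1 by ring, Nat.factorial_succ]
    rw [this]
    have : (m + n + 3) * (m + n + 2).factorial ≤ (m + n + 4) * (m + n + 2).factorial :=
      Nat.mul_le_mul_right _ (by omega)
    calc (m + n + 4) * ((m + n + 3) * (m + n + 2).factorial)
        ≤ (m + n + 4) * ((m + n + 4) * (m + n + 2).factorial) := Nat.mul_le_mul_left _ this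
      _ = (m + n + 4) * (m + n + 4) * (m + n + 2).factorial := by ring
  have hcab : (c : ℝ) * (m.factorial : ℝ) * (n.factorial : ℝ)
      ≤ ((m : ℝ) + n + 4) ^ 2 / 4 * ((m + n + 2).factorial : ℝ) := by
    have h := hnat.trans hnat2
    have h' : (4 : ℝ) * ((c:ℝ) * (m.factorial:ℝ) * (n.factorial:ℝ))
        ≤ ((m:ℝ) + n + 4) * ((m:ℝ) + n + 4) * ((m + n + 2).factorial : ℝ) := by
      exact_mod_cast h
    nlinarith
  have hab : (m.factorial : ℝ) * (n.factorial : ℝ) * ((m : ℝ) + n + 2)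
      ≤ ((m + n + 2).factorial : ℝ) := by
    have h1 : m.factorial * n.factorial * (m + n + 2) ≤ (m + n + 2).factorial := by
      calc m.factorial * n.factorial * (m + n + 2)
          ≤ (m + n).factorial * (m + n + 2) :=
            Nat.mul_le_mul_right _ (fact_mul_fact_le m n)
        _ ≤ (m + n + 2).factorial := by
            rw [show m + n + 2 = (m + n + 1) + 1 by ring, Nat.factorial_succ, Nat.factorial_succ]
            calc (m + n).factorial * (m + n + 2)
                = (m + n + 2) * (1 * (m + n).factorial) := by ring
              _ ≤ (m + n + 2) * ((m + n + 1) * (m + n).factorial) :=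
                  Nat.mul_le_mul_left _ (Nat.mul_le_mul_right _ (by omega))
    exact_mod_cast h1
  calc (c : ℝ) * (m.factorial : ℝ) ^ s * (n.factorial : ℝ) ^ s * ((m:ℝ) + n + 2) ^ (s - 1)
      = ((c:ℝ) * (m.factorial:ℝ) * (n.factorial:ℝ)) *
          ((m.factorial:ℝ) ^ (s-1) * (n.factorial:ℝ) ^ (s-1) * ((m:ℝ)+n+2) ^ (s-1)) := by
        rw [rpow_split s _ ha, rpow_split s _ hb]; ring
    _ = ((c:ℝ) * (m.factorial:ℝ) * (n.factorial:ℝ)) *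
          (((m.factorial:ℝ) * (n.factorial:ℝ) * ((m:ℝ)+n+2)) ^ (s-1)) := by
        rw [Real.mul_rpow (by positivity) (by positivity),
          Real.mul_rpow (by positivity) (by positivity)]
    _ ≤ (((m : ℝ) + n + 4) ^ 2 / 4 * ((m + n + 2).factorial : ℝ)) *
          (((m + n + 2).factorial : ℝ) ^ (s-1)) := by
        apply mul_le_mul hcab (Real.rpow_le_rpow (by positivity) hab hs1) (by positivity)
        positivity
    _ = ((m : ℝ) + n + 4) ^ 2 / 4 * ((m + n + 2).factorial : ℝ) ^ s := by
        rw [rpow_split s _ hF]; ring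

/-- Factorial combinatorial estimate for the Leibniz-formula sums in Gevrey iterations. -/
theorem factorial_combinatorial (s : ℝ) (hs : 2 ≤ s) :
    (∀ j i : ℕ, 4 ≤ j → 2 ≤ i → i ≤ j - 2 →
      ((Nat.factorial (i - 2) : ℝ)) ^ s * ((Nat.factorial (j - i - 2) : ℝ)) ^ s
        ≤ ((Nat.factorial (j - 4) : ℝ)) ^ s) ∧
    (∃ C > 0, ∀ j : ℕ, 4 ≤ j →
      (∑ i ∈ Finset.Icc 2 (j - 2), (j.choose i : ℝ) *
          ((Nat.factorial (i - 2) : ℝ)) ^ s * ((Nat.factorial (j - i - 2) : ℝ)) ^ s)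
        ≤ C * ((Nat.factorial (j - 2) : ℝ)) ^ s * (j : ℝ) ^ 3 / ((j : ℝ) - 2) ^ (s - 1)) := by
  have hs0 : (0:ℝ) ≤ s := by linarith
  constructor
  · intro j i hj hi hij
    have h4 : j - 4 = (i - 2) + (j - i - 2) := by omega
    rw [h4]
    exact part1_aux s hs0 (i - 2) (j - i - 2)
  · refine ⟨1, one_pos, fun j hj => ?_⟩
    have hj4 : (4:ℝ) ≤ (j:ℝ) := by exact_mod_cast hj
    have hD : (0:ℝ) < (j : ℝ) - 2 := by linarith
    have hterm : ∀ i ∈ Finset.Icc 2 (j - 2), (j.choose i : ℝ) *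
        ((Nat.factorial (i - 2) : ℝ)) ^ s * ((Nat.factorial (j - i - 2) : ℝ)) ^ s ≤
        (j:ℝ)^2 / 4 * ((Nat.factorial (j-2) : ℝ)) ^ s / ((j:ℝ) - 2) ^ (s - 1) := by
      intro i hi
      rw [Finset.mem_Icc] at hi
      obtain ⟨hi2, hij⟩ := hi
      obtain ⟨m, rfl⟩ : ∃ m, i = m + 2 := ⟨i - 2, by omega⟩
      obtain ⟨n, rfl⟩ : ∃ n, j = m + n + 4 := ⟨j - (m + 2) - 2, by omega⟩
      have e1 : m + 2 - 2 = m := by omega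
      have e2 : m + n + 4 - (m + 2) - 2 = n := by omega
      have e3 : m + n + 4 - 2 = m + n + 2 := by omega
      rw [e1, e2, e3]
      have ecast : ((m + n + 4 : ℕ) : ℝ) = (m:ℝ) + n + 4 := by push_cast; ring
      have ecast2 : ((m + n + 4 : ℕ) : ℝ) - 2 = (m:ℝ) + n + 2 := by push_cast; ring
      rw [ecast2, ecast]
      exact key_term s hs m n
    calc (∑ i ∈ Finset.Icc 2 (j - 2), (j.choose i : ℝ) *
          ((Nat.factorial (i - 2) : ℝ)) ^ s * ((Nat.factorial (j - i - 2) : ℝ)) ^ s)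
        ≤ (Finset.Icc 2 (j - 2)).card •
            ((j:ℝ)^2 / 4 * ((Nat.factorial (j-2) : ℝ)) ^ s / ((j:ℝ) - 2) ^ (s - 1)) :=
          Finset.sum_le_card_nsmul _ _ _ hterm
      _ = ((Finset.Icc 2 (j - 2)).card : ℝ) *
            ((j:ℝ)^2 / 4 * ((Nat.factorial (j-2) : ℝ)) ^ s / ((j:ℝ) - 2) ^ (s - 1)) :=
          nsmul_eq_mul _ _
      _ ≤ 1 * ((Nat.factorial (j-2) : ℝ)) ^ s * (j : ℝ) ^ 3 / ((j : ℝ) - 2) ^ (s - 1) := by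
          rw [Nat.card_Icc]
          have hcardn : (j - 2 + 1 - 2 : ℕ) ≤ j := by omega
          have hcard : ((j - 2 + 1 - 2 : ℕ) : ℝ) ≤ (j : ℝ) := by exact_mod_cast hcardn
          have hFs : (0:ℝ) ≤ ((Nat.factorial (j-2) : ℝ)) ^ s / ((j:ℝ) - 2) ^ (s - 1) := by
            positivity
          have hcn : (0:ℝ) ≤ ((j - 2 + 1 - 2 : ℕ) : ℝ) := Nat.cast_nonneg _
          calc ((j - 2 + 1 - 2 : ℕ) : ℝ) *
                ((j:ℝ)^2 / 4 * ((Nat.factorial (j-2) : ℝ)) ^ s / ((j:ℝ) - 2) ^ (s - 1))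
              = (((j - 2 + 1 - 2 : ℕ) : ℝ) * ((j:ℝ)^2 / 4)) *
                  (((Nat.factorial (j-2) : ℝ)) ^ s / ((j:ℝ) - 2) ^ (s - 1)) := by ring
            _ ≤ (j:ℝ)^3 * (((Nat.factorial (j-2) : ℝ)) ^ s / ((j:ℝ) - 2) ^ (s - 1)) := by
                apply mul_le_mul_of_nonneg_right _ hFs
                nlinarith
            _ = 1 * ((Nat.factorial (j-2) : ℝ)) ^ s * (j : ℝ) ^ 3 / ((j : ℝ) - 2) ^ (s - 1) := by
                ring
end

section
/- Let δ ∈ (0,1], s ≥ 2/δ, and m ∈ ℕ with (m-1)δ/2 ≤ r ≤ mδ/2 ≤ 1 + δ/2. Suppose a nonnegative function N ↦ A(r, N) satisfies: A(0,N) ≤ K, A(δ/2·m', N) ≤ K (N/ρ)^{s δ m'/2} for all integers m' ≤ m, and A is log-convex in r in the sense that A(r,N) ≤ ε A(r₂,N) + ε^{-(r-r₁)/(r₂-r)} A(r₁,N) for all r₁ < r < r₂ and ε > 0. Then A(r,N) ≤ 2K (N/ρ)^{sr} for all r ∈ [0, 1]. -/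
/-- Abstract interpolation lemma: from Gevrey-weighted bounds on the discrete grid of
exponents `r = m δ/2` and the interpolation inequality, deduce the bound for all `r ∈ [0,1]`. -/
theorem abstract_interpolation (δ s ρ Nv K : ℝ) (A : ℝ → ℝ)
    (hδ0 : 0 < δ) (hδ1 : δ ≤ 1) (hs : 2 / δ ≤ s)
    (hρ0 : 0 < ρ) (hρ1 : ρ < 1) (hN : 1 ≤ Nv / ρ) (hK : 0 ≤ K)
    (hA : ∀ r : ℝ, 0 ≤ A r)
    (h0 : A 0 ≤ K)
    (hgrid : ∀ m' : ℕ, (m' : ℝ) * δ / 2 ≤ 1 + δ / 2 →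
      A (δ / 2 * m') ≤ K * (Nv / ρ) ^ (s * δ * m' / 2))
    (hinterp : ∀ r₁ r r₂ ε : ℝ, r₁ < r → r < r₂ → 0 < ε →
      A r ≤ ε * A r₂ + ε ^ (-(r - r₁) / (r₂ - r)) * A r₁) :
    ∀ r : ℝ, 0 ≤ r → r ≤ 1 → A r ≤ 2 * K * (Nv / ρ) ^ (s * r) := by
  intro r hr0 hr1
  set X := Nv / ρ with hX
  have hX0 : (0:ℝ) < X := lt_of_lt_of_le one_pos hN
  have hXpow : ∀ e : ℝ, 0 ≤ e → (1:ℝ) ≤ X ^ e := fun e he => Real.one_le_rpow hN he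
  have hs0 : 0 ≤ s := le_trans (by positivity) hs
  set m := ⌈2 * r / δ⌉₊ with hm
  clear_value m
  have hrm : r ≤ δ / 2 * m := by
    have := Nat.le_ceil (2 * r / δ)
    rw [← hm] at this
    rw [div_le_iff₀ hδ0] at this
    linarith
  have hmlt : (m : ℝ) < 2 * r / δ + 1 := by
    have h := Nat.ceil_lt_add_one (show (0:ℝ) ≤ 2 * r / δ by positivity)
    rw [← hm] at h
    exact h
  have hcond : (m : ℝ) * δ / 2 ≤ 1 + δ / 2 := by
    have h2 : 2 * r / δ * δ = 2 * r := div_mul_cancel₀ _ (ne_of_gt hδ0)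
    nlinarith [mul_lt_mul_of_pos_right hmlt hδ0]
  by_cases hcase : r = δ / 2 * m
  · have h1 := hgrid m hcond
    rw [← hcase] at h1
    have he : s * δ * m / 2 = s * r := by rw [hcase]; ring
    rw [he] at h1
    have hp : (0:ℝ) ≤ K * X ^ (s * r) := by positivity
    linarith
  · have hrlt : r < δ / 2 * m := lt_of_le_of_ne hrm hcase
    have hm1 : 1 ≤ m := by
      rcases Nat.eq_zero_or_pos m with h | h
      · exfalso
        rw [h] at hrlt
        simp at hrlt
        nlinarith
      · exact h
    obtain ⟨p, rfl⟩ : ∃ p, m = p + 1 := ⟨m - 1, (Nat.succ_pred_eq_of_pos hm1).symm⟩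
    have hr₁ : δ / 2 * p < r := by
      have hlt : (p : ℝ) < 2 * r / δ := by
        have hp2 : p < ⌈2 * r / δ⌉₊ := by rw [← hm]; omega
        exact_mod_cast (Nat.lt_ceil.mp hp2)
      rw [lt_div_iff₀ hδ0] at hlt
      linarith
    have hpush : (↑(p+1) : ℝ) = (p : ℝ) + 1 := by push_cast; ring
    set r₁ := δ / 2 * (p : ℝ) with hr1def
    set r₂ := δ / 2 * ((p : ℝ) + 1) with hr2def
    have hrlt2 : r < r₂ := by rw [hr2def, ← hpush]; exact_mod_cast hrlt
    have hd : 0 < r₂ - r := by linarith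
    set ε := X ^ (-(s * (r₂ - r))) with hεdef
    have hε : 0 < ε := Real.rpow_pos_of_pos hX0 _
    have hg2 : A r₂ ≤ K * X ^ (s * δ * ((p:ℝ)+1) / 2) := by
      have := hgrid (p+1) (by rw [hpush] at hcond ⊢; exact hcond)
      rw [hpush] at this
      exact this
    have hg1 : A r₁ ≤ K * X ^ (s * δ * (p:ℝ) / 2) := by
      have hc1 : (p : ℝ) * δ / 2 ≤ 1 + δ / 2 := by
        rw [hpush] at hcond; nlinarith
      exact hgrid p hc1
    have key := hinterp r₁ r r₂ ε hr₁ hrlt2 hε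
    have t1 : ε * A r₂ ≤ K * X ^ (s * r) := by
      calc ε * A r₂ ≤ ε * (K * X ^ (s * δ * ((p:ℝ)+1) / 2)) :=
            mul_le_mul_of_nonneg_left hg2 hε.le
        _ = K * (X ^ (-(s * (r₂ - r))) * X ^ (s * δ * ((p:ℝ)+1) / 2)) := by
            rw [hεdef]; ring
        _ = K * X ^ (-(s * (r₂ - r)) + s * δ * ((p:ℝ)+1) / 2) := by
            rw [← Real.rpow_add hX0]
        _ = K * X ^ (s * r) := by
            congr 1
            rw [hr2def]; ring
    have t2 : ε ^ (-(r - r₁) / (r₂ - r)) * A r₁ ≤ K * X ^ (s * r) := by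
      have hεq : ε ^ (-(r - r₁) / (r₂ - r)) = X ^ (s * (r - r₁)) := by
        rw [hεdef, ← Real.rpow_mul hX0.le]
        congr 1
        field_simp
      rw [hεq]
      have hpos : (0:ℝ) ≤ X ^ (s * (r - r₁)) := (Real.rpow_pos_of_pos hX0 _).le
      calc X ^ (s * (r - r₁)) * A r₁ ≤ X ^ (s * (r - r₁)) * (K * X ^ (s * δ * (p:ℝ) / 2)) :=
            mul_le_mul_of_nonneg_left hg1 hpos
        _ = K * (X ^ (s * (r - r₁)) * X ^ (s * δ * (p:ℝ) / 2)) := by ring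
        _ = K * X ^ (s * (r - r₁) + s * δ * (p:ℝ) / 2) := by rw [← Real.rpow_add hX0]
        _ = K * X ^ (s * r) := by
            congr 1
            rw [hr1def]; ring
    calc A r ≤ ε * A r₂ + ε ^ (-(r - r₁) / (r₂ - r)) * A r₁ := key
      _ ≤ K * X ^ (s * r) + K * X ^ (s * r) := add_le_add t1 t2
      _ = 2 * K * X ^ (s * r) := by ring
end
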